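/- arXiv:2408.01769 — 9 statements merged into one kernel-verified Lean document; each statement's English description precedes it below -/
import Mathlib

section
/- Let C be a linear subspace of F_2^n and let G ⊆ C be a generating set of C. Then C is spanned by the set of minimal nonzero codewords c ∈ C for which there exists h ∈ G with supp(c) ⊆ supp(h). (This is the outcome of the splitting process: replacing a non-minimal generator h by c' and h − c' with supp(c') ⊊ supp(h) terminates in finitely many rounds and yields a generating set of minimal stabilizer generators, each supported inside the support of an original generator; in particular the low-density property of the parity-check matrix is preserved.) -/
/-- The support of a vector over `F_2`. -/
def supp {n : ℕ} (v : Fin n → ZMod 2) : Finset (Fin n) :=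
  Finset.univ.filter (fun k => v k = 1)

lemma zmod2_cases (x : ZMod 2) : x = 0 ∨ x = 1 := by revert x; decide

lemma mem_supp {n : ℕ} (v : Fin n → ZMod 2) (k : Fin n) :
    k ∈ supp v ↔ v k = 1 := by simp [supp]

lemma eq_of_supp_eq {n : ℕ} {u v : Fin n → ZMod 2} (h : supp u = supp v) : u = v := by
  funext k
  rcases zmod2_cases (u k) with hu | hu <;> rcases zmod2_cases (v k) with hv | hv
  · rw [hu, hv]
  · have : k ∈ supp v := (mem_supp v k).2 hv
    rw [← h, mem_supp] at this; rw [hu] at this; exact absurd this (by decide)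
  · have : k ∈ supp u := (mem_supp u k).2 hu
    rw [h, mem_supp] at this; rw [hv] at this; exact absurd this (by decide)
  · rw [hu, hv]

lemma supp_add_subset {n : ℕ} {u v : Fin n → ZMod 2} (h : supp v ⊆ supp u) :
    supp (u + v) ⊆ supp u := by
  intro k hk
  rw [mem_supp] at hk ⊢
  rcases zmod2_cases (u k) with hu | hu
  · rcases zmod2_cases (v k) with hv | hv
    · simp [hu, hv, Pi.add_apply] at hk
    · exact absurd ((mem_supp u k).1 (h ((mem_supp v k).2 hv))) (by simp [hu])
  · exact hu

/-- If `G ⊆ C` generates the linear subspace `C ⊆ F_2^n`, then `C` is spanned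
by the minimal nonzero codewords of `C` whose support lies inside the support of some
generator `h ∈ G`. -/
theorem span_minimal_codewords_of_generating_set
    (n : ℕ) (C : Submodule (ZMod 2) (Fin n → ZMod 2))
    (G : Set (Fin n → ZMod 2)) (hGC : G ⊆ (C : Set (Fin n → ZMod 2)))
    (hspan : Submodule.span (ZMod 2) G = C) :
    Submodule.span (ZMod 2)
      {c : Fin n → ZMod 2 | c ∈ C ∧ c ≠ 0 ∧
        (∀ c' : Fin n → ZMod 2, c' ∈ C → supp c' ⊆ supp c → c' = 0 ∨ c' = c) ∧
        ∃ h ∈ G, supp c ⊆ supp h} = C := by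
  set S := {c : Fin n → ZMod 2 | c ∈ C ∧ c ≠ 0 ∧
        (∀ c' : Fin n → ZMod 2, c' ∈ C → supp c' ⊆ supp c → c' = 0 ∨ c' = c) ∧
        ∃ h ∈ G, supp c ⊆ supp h} with hS
  apply le_antisymm
  · rw [Submodule.span_le]
    intro c hc
    exact hc.1
  · rw [← hspan, Submodule.span_le]
    intro h hG
    -- key claim by strong induction on support size
    have key : ∀ m : ℕ, ∀ c : Fin n → ZMod 2, c ∈ C → supp c ⊆ supp h →
        (supp c).card ≤ m → c ∈ Submodule.span (ZMod 2) S := by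
      intro m
      induction m with
      | zero =>
        intro c hcC hch hcard
        have : supp c = ∅ := Finset.card_eq_zero.1 (Nat.le_zero.1 hcard)
        have hc0 : c = 0 := by
          funext k
          rcases zmod2_cases (c k) with h0 | h1
          · exact h0
          · exact absurd ((mem_supp c k).2 h1) (by simp [this])
        simp [hc0]
      | succ m ih =>
        intro c hcC hch hcard
        by_cases hc0 : c = 0
        · simp [hc0]
        by_cases hmin : ∀ c' : Fin n → ZMod 2, c' ∈ C → supp c' ⊆ supp c → c' = 0 ∨ c' = c
        · exact Submodule.subset_span ⟨hcC, hc0, hmin, h, hG, hch⟩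
        · push_neg at hmin
          obtain ⟨c', hc'C, hc'sub, hc'0, hc'ne⟩ := hmin
          -- supp c' ⊊ supp c
          have hssub : supp c' ⊂ supp c :=
            lt_of_le_of_ne hc'sub (fun heq => hc'ne (eq_of_supp_eq heq))
          -- supp (c + c') ⊊ supp c since c' ≠ 0
          have hadd_sub : supp (c + c') ⊆ supp c := supp_add_subset hc'sub
          have hadd_ssub : supp (c + c') ⊂ supp c := by
            refine lt_of_le_of_ne hadd_sub (fun heq => ?_)
            have : c + c' = c := eq_of_supp_eq heq
            have : c' = 0 := by
              have := congrArg (· - c) this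
              simpa [add_sub_cancel_left] using this
            exact hc'0 this
          have h1 : c' ∈ Submodule.span (ZMod 2) S :=
            ih c' hc'C (hc'sub.trans hch)
              (Nat.le_of_lt_succ (lt_of_lt_of_le (Finset.card_lt_card hssub) hcard))
          have h2 : c + c' ∈ Submodule.span (ZMod 2) S :=
            ih (c + c') ((C.add_mem hcC hc'C)) (hadd_sub.trans hch)
              (Nat.le_of_lt_succ (lt_of_lt_of_le (Finset.card_lt_card hadd_ssub) hcard))
          have : c = (c + c') + c' := by
            funext k
            simp [Pi.add_apply, add_assoc, CharTwo.add_self_eq_zero]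
          rw [this]
          exact Submodule.add_mem _ h2 h1
    exact key (supp h).card h (hGC hG) (le_refl _) (le_refl _)
end

section
/- Consider a CSS code given by H_x ∈ F_2^{m_z × n}, H_z ∈ F_2^{m_x × n} with H_x · H_zᵀ = 0, and assume the code is Z-reasonable. Fix a row i of H_x and a pairing σ = (σ_j)_j of its common neighbour qubits. Then for every set V' ⊆ supp(H_x i) closed under every σ_j (whenever q ∈ V' ∩ K_{ij}, also σ_j(q) ∈ V'), the indicator vector χ_{V'} ∈ F_2^n lies in the row space of H_x, i.e. the Z operator supported on V' is a Z stabilizer. -/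
/-- For a Z-reasonable CSS code `(H_x, H_z)` with `H_x·H_zᵀ = 0`, a row `i`
of `H_x` and a fixed-point-free pairing `σ_j` of each common support
`K_{ij} = supp(H_x i) ∩ supp(H_z j)`: every subset `V' ⊆ supp(H_x i)` closed under all
`σ_j` has its indicator vector in the row space of `H_x`, i.e. the Z operator supported
on `V'` is a Z stabilizer. -/
theorem closed_subset_is_stabilizer_of_reasonable
    (n mz mx : ℕ)
    (Hx : Matrix (Fin mz) (Fin n) (ZMod 2))
    (Hz : Matrix (Fin mx) (Fin n) (ZMod 2))
    (hortho : Hx * Hz.transpose = 0)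
    (hreasonable : ∀ z : Fin n → ZMod 2, Hz.mulVec z = 0 →
      (∃ i' : Fin mz, supp z ⊆ supp (Hx i')) →
      ∃ y : Fin mz → ZMod 2, z = Matrix.vecMul y Hx)
    (i : Fin mz)
    (σ : Fin mx → Fin n → Fin n)
    (hσmem : ∀ (j : Fin mx) (q : Fin n),
      q ∈ supp (Hx i) ∩ supp (Hz j) → σ j q ∈ supp (Hx i) ∩ supp (Hz j))
    (hσinv : ∀ (j : Fin mx) (q : Fin n),
      q ∈ supp (Hx i) ∩ supp (Hz j) → σ j (σ j q) = q)
    (hσnofix : ∀ (j : Fin mx) (q : Fin n),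
      q ∈ supp (Hx i) ∩ supp (Hz j) → σ j q ≠ q)
    (V' : Finset (Fin n)) (hV' : V' ⊆ supp (Hx i))
    (hclosed : ∀ (j : Fin mx) (q : Fin n),
      q ∈ V' → q ∈ supp (Hx i) ∩ supp (Hz j) → σ j q ∈ V') :
    ∃ y : Fin mz → ZMod 2,
      (fun k => if k ∈ V' then (1 : ZMod 2) else 0) = Matrix.vecMul y Hx := by
  set z : Fin n → ZMod 2 := fun k => if k ∈ V' then (1 : ZMod 2) else 0 with hz
  have hsupp : supp z = V' := by
    ext k
    simp only [supp, Finset.mem_filter, Finset.mem_univ, true_and, hz]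
    by_cases h : k ∈ V' <;> simp [h]
  apply hreasonable
  · -- Hz.mulVec z = 0
    funext j
    show Hz.mulVec z j = (0 : ZMod 2)
    have h1 : Hz.mulVec z j = ∑ k ∈ V', Hz j k := by
      simp only [Matrix.mulVec, dotProduct, hz]
      simp only [mul_ite, mul_one, mul_zero]
      rw [Finset.sum_ite_mem]
      simp
    rw [h1]
    have h2 : ∑ k ∈ V', Hz j k
        = ∑ k ∈ V'.filter (fun k => Hz j k = 1), Hz j k := by
      rw [Finset.sum_filter_of_ne]
      intro k _ hk
      have h01 : ∀ a : ZMod 2, a = 0 ∨ a = 1 := by decide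
      rcases h01 (Hz j k) with h | h
      · exact absurd h hk
      · exact h
    rw [h2]
    -- every element of the filter is in the common support
    have hmemK : ∀ q ∈ V'.filter (fun k => Hz j k = 1),
        q ∈ supp (Hx i) ∩ supp (Hz j) := by
      intro q hq
      rw [Finset.mem_filter] at hq
      exact Finset.mem_inter.mpr ⟨hV' hq.1, by
        simp [supp, hq.2]⟩
    refine Finset.sum_involution (fun q _ => σ j q) ?_ ?_ ?_ ?_
    · intro q hq
      have hK := hmemK q hq
      have hK' := hσmem j q hK
      rw [Finset.mem_filter] at hq
      have : Hz j (σ j q) = 1 := by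
        have := (Finset.mem_inter.mp hK').2
        simpa [supp] using this
      rw [hq.2, this]
      decide
    · intro q hq _
      exact hσnofix j q (hmemK q hq)
    · intro q hq
      have hK := hmemK q hq
      have hK' := hσmem j q hK
      rw [Finset.mem_filter] at hq ⊢
      refine ⟨hclosed j q hq.1 hK, ?_⟩
      have := (Finset.mem_inter.mp hK').2
      simpa [supp] using this
    · intro q hq
      exact hσinv j q (hmemK q hq)
  · exact ⟨i, by rw [hsupp]; exact hV'⟩
end

section
/- Consider a CSS code given by H_x ∈ F_2^{m_z × n}, H_z ∈ F_2^{m_x × n} with H_x · H_zᵀ = 0. Assume the code is Z-reasonable and that row i of H_x is minimal. Fix any pairing σ = (σ_j)_j of the common neighbour qubits of row i. Define a graph on the vertex set supp(H_x i) by joining q and q' (q ≠ q') whenever there exists a row j of H_z with q ∈ K_{ij} and σ_j(q) = q'. Then this graph is connected, i.e. the link of the Z check i in the square complex obtained from the pairing is connected. (The symmetric statement holds for X checks, exchanging the roles of H_x and H_z.) -/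
/-- For a Z-reasonable CSS code `(H_x, H_z)` with `H_x·H_zᵀ = 0`, if row `i`
of `H_x` is minimal, then for any fixed-point-free pairing `σ_j` of the common supports
`K_{ij} = supp(H_x i) ∩ supp(H_z j)`, the graph on `supp(H_x i)` joining `q ≠ q'`
whenever `σ_j q = q'` for some row `j` of `H_z` (the link of the Z check `i`) is
connected. -/
theorem link_of_minimal_check_is_connected
    (n mz mx : ℕ)
    (Hx : Matrix (Fin mz) (Fin n) (ZMod 2))
    (Hz : Matrix (Fin mx) (Fin n) (ZMod 2))
    (hortho : Hx * Hz.transpose = 0)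
    (hreasonable : ∀ z : Fin n → ZMod 2, Hz.mulVec z = 0 →
      (∃ i' : Fin mz, supp z ⊆ supp (Hx i')) →
      ∃ y : Fin mz → ZMod 2, z = Matrix.vecMul y Hx)
    (i : Fin mz)
    (hminimal : ∀ y : Fin mz → ZMod 2,
      supp (Matrix.vecMul y Hx) ⊆ supp (Hx i) →
      Matrix.vecMul y Hx = 0 ∨ Matrix.vecMul y Hx = Hx i)
    (σ : Fin mx → Fin n → Fin n)
    (hσmem : ∀ (j : Fin mx) (q : Fin n),
      q ∈ supp (Hx i) ∩ supp (Hz j) → σ j q ∈ supp (Hx i) ∩ supp (Hz j))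
    (hσinv : ∀ (j : Fin mx) (q : Fin n),
      q ∈ supp (Hx i) ∩ supp (Hz j) → σ j (σ j q) = q)
    (hσnofix : ∀ (j : Fin mx) (q : Fin n),
      q ∈ supp (Hx i) ∩ supp (Hz j) → σ j q ≠ q) :
    ∀ q ∈ supp (Hx i), ∀ q' ∈ supp (Hx i),
      Relation.ReflTransGen
        (fun a a' : Fin n => a ≠ a' ∧
          ∃ j : Fin mx, a ∈ supp (Hx i) ∩ supp (Hz j) ∧ σ j a = a')
        q q' := by
  classical
  intro q hq q' hq'
  set R : Fin n → Fin n → Prop := (fun a a' : Fin n => a ≠ a' ∧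
          ∃ j : Fin mx, a ∈ supp (Hx i) ∩ supp (Hz j) ∧ σ j a = a') with hR
  set C : Finset (Fin n) :=
    (supp (Hx i)).filter (fun x => Relation.ReflTransGen R q x) with hCdef
  set z : Fin n → ZMod 2 := fun k => if k ∈ C then 1 else 0 with hz
  have hzmem : ∀ k, z k = 1 ↔ k ∈ C := by
    intro k
    by_cases h : k ∈ C <;> simp [hz, h]
  have hsupp : supp z = C := by
    ext k; simp [supp, hzmem]
  have hCsub : C ⊆ supp (Hx i) := Finset.filter_subset _ _
  -- forward closure
  have hfwd : ∀ (j : Fin mx) (k : Fin n),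
      k ∈ supp (Hx i) ∩ supp (Hz j) → k ∈ C → σ j k ∈ C := by
    intro j k hk hkC
    have hmem := hσmem j k hk
    rcases Finset.mem_filter.mp hkC with ⟨_, hreach⟩
    refine Finset.mem_filter.mpr ⟨Finset.mem_inter.mp hmem |>.1, ?_⟩
    exact hreach.tail ⟨(hσnofix j k hk).symm, j, hk, rfl⟩
  have hclosed : ∀ (j : Fin mx) (k : Fin n),
      k ∈ supp (Hx i) ∩ supp (Hz j) → (k ∈ C ↔ σ j k ∈ C) := by
    intro j k hk
    constructor
    · exact hfwd j k hk
    · intro h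
      have := hfwd j (σ j k) (hσmem j k hk) h
      rwa [hσinv j k hk] at this
  have hz01 : ∀ a : ZMod 2, a = 0 ∨ a = 1 := by decide
  have hz0 : Hz.mulVec z = 0 := by
    funext j
    show ∑ k, Hz j k * z k = 0
    set S : Finset (Fin n) := C ∩ supp (Hz j) with hS
    have hSsub : ∀ k ∈ S, k ∈ supp (Hx i) ∩ supp (Hz j) := by
      intro k hk
      rcases Finset.mem_inter.mp hk with ⟨h1, h2⟩
      exact Finset.mem_inter.mpr ⟨hCsub h1, h2⟩
    have h1 : ∑ k, Hz j k * z k = ∑ k ∈ S, Hz j k * z k := by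
      refine (Finset.sum_subset (Finset.subset_univ S) ?_).symm
      intro k _ hk
      rcases hz01 (Hz j k) with h | h
      · rw [h, zero_mul]
      · have hkz : z k = 0 := by
          rcases hz01 (z k) with h' | h'
          · exact h'
          · exact absurd (Finset.mem_inter.mpr ⟨(hzmem k).mp h',
              Finset.mem_filter.mpr ⟨Finset.mem_univ k, h⟩⟩) hk
        rw [hkz, mul_zero]
    have h2 : ∑ k ∈ S, Hz j k * z k = ∑ k ∈ S, (1 : ZMod 2) := by
      refine Finset.sum_congr rfl ?_
      intro k hk
      rcases Finset.mem_inter.mp hk with ⟨h1', h2'⟩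
      rw [(hzmem k).mpr h1', (Finset.mem_filter.mp h2').2, one_mul]
    have h3 : ∑ k ∈ S, (1 : ZMod 2) = 0 := by
      refine Finset.sum_involution (fun a _ => σ j a) (fun a ha => by decide)
        (fun a ha _ => hσnofix j a (hSsub a ha)) (fun a ha => ?_) (fun a ha => ?_)
      · have hk := hSsub a ha
        refine Finset.mem_inter.mpr ⟨?_, (Finset.mem_inter.mp (hσmem j a hk)).2⟩
        exact (hclosed j a hk).mp (Finset.mem_inter.mp ha).1
      · exact hσinv j a (hSsub a ha)
    rw [h1, h2, h3]
  obtain ⟨y, hy⟩ := hreasonable z hz0 ⟨i, by rw [hsupp]; exact hCsub⟩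
  have hsub : supp (Matrix.vecMul y Hx) ⊆ supp (Hx i) := by
    rw [← hy, hsupp]; exact hCsub
  rcases hminimal y hsub with h0 | hi
  · exfalso
    have : z q = 1 := (hzmem q).mpr
      (Finset.mem_filter.mpr ⟨hq, Relation.ReflTransGen.refl⟩)
    rw [hy, h0] at this
    exact one_ne_zero this.symm
  · have hzq' : z q' = 1 := by
      rw [hy, hi]
      exact (Finset.mem_filter.mp hq').2
    exact (Finset.mem_filter.mp ((hzmem q').mp hzq')).2
end

section
/- Let δ0 : F_2^{m_0} → F_2^{n} and δ1 : F_2^{n} → F_2^{m_2} be F_2-linear maps with δ1 ∘ δ0 = 0, and let α, β, γ > 0 be real numbers. Assume the complex is an (α,β,γ)-small-set coboundary expander. Then for every finite sequence c_0, c_1, …, c_T in F_2^n with c_0 = 0, with consecutive terms at Hamming distance exactly 1 (|c_t + c_{t+1}| = 1 for all t < T), and with c_T ∈ ker δ1 \ im δ0, there exists an index t ≤ T such that |δ1 c_t| ≥ β·⌊α·n⌋. In other words, the X-energy barrier of the associated code is at least β·⌊α·n⌋. -/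
/-- Hamming weight of a vector over `F_2`. -/
def wt {m : ℕ} (v : Fin m → ZMod 2) : ℕ :=
  (Finset.univ.filter (fun k => v k ≠ 0)).card

lemma wt_zero {m : ℕ} : wt (0 : Fin m → ZMod 2) = 0 := by simp [wt]

lemma wt_add_le {m : ℕ} (a b : Fin m → ZMod 2) : wt (a + b) ≤ wt a + wt b := by
  classical
  unfold wt
  refine le_trans (Finset.card_le_card ?_) (Finset.card_union_le _ _)
  intro k hk
  simp only [Finset.mem_filter, Finset.mem_union, Finset.mem_univ, true_and] at *
  by_contra h
  push_neg at h
  simp [Pi.add_apply, h.1, h.2] at hk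

lemma wt_eq_zero {m : ℕ} {a : Fin m → ZMod 2} (h : wt a = 0) : a = 0 := by
  classical
  unfold wt at h
  rw [Finset.card_eq_zero, Finset.filter_eq_empty_iff] at h
  funext k
  have := h (Finset.mem_univ k)
  simpa using this

/-- If the 3-term complex `δ0 : F_2^{m₀} → F_2^n`, `δ1 : F_2^n → F_2^{m₂}`
(with `δ1 ∘ δ0 = 0`) is an `(α,β,γ)`-small-set coboundary expander, then along any walk
`c_0 = 0, c_1, …, c_T` with unit Hamming steps ending at a cocycle that is not a
coboundary (an X-logical operator), some step has at least `β·⌊α·n⌋` violated checks: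
the X-energy barrier is at least `β·⌊α·n⌋`. -/
theorem small_set_coboundary_expansion_implies_energy_barrier
    (m₀ n m₂ : ℕ)
    (δ0 : (Fin m₀ → ZMod 2) →ₗ[ZMod 2] (Fin n → ZMod 2))
    (δ1 : (Fin n → ZMod 2) →ₗ[ZMod 2] (Fin m₂ → ZMod 2))
    (hchain : δ1.comp δ0 = 0)
    (α β γ : ℝ) (hα : 0 < α) (hβ : 0 < β) (hγ : 0 < γ)
    (hexp : ∀ c : Fin n → ZMod 2, (wt c : ℝ) ≤ α * n →
      ∃ c0 : Fin m₀ → ZMod 2,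
        β * (wt (c + δ0 c0) : ℝ) ≤ (wt (δ1 c) : ℝ) ∧
        γ * (wt c0 : ℝ) ≤ (wt c : ℝ))
    (T : ℕ) (c : ℕ → Fin n → ZMod 2)
    (h0 : c 0 = 0)
    (hstep : ∀ t < T, wt (c t + c (t + 1)) = 1)
    (hcocycle : δ1 (c T) = 0)
    (hnotcobound : c T ∉ Set.range δ0) :
    ∃ t ≤ T, β * (⌊α * n⌋₊ : ℝ) ≤ (wt (δ1 (c t)) : ℝ) := by
  classical
  set W : ℕ := ⌊α * n⌋₊ with hW
  -- trivial case W = 0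
  rcases Nat.eq_zero_or_pos W with hW0 | hWpos
  · exact ⟨0, Nat.zero_le _, by simp [hW0]⟩
  by_contra hcon
  push_neg at hcon
  have hWle : (W : ℝ) ≤ α * n := Nat.floor_le (by positivity)
  have hδ1δ0 : ∀ x, δ1 (δ0 x) = 0 := by
    intro x
    have := LinearMap.congr_fun hchain x
    simpa using this
  have key : ∀ x y z : ZMod 2, (x + y) + (x + z) = z + y := by decide
  -- main induction
  have main : ∀ t ≤ T, ∃ c0 : Fin m₀ → ZMod 2, wt (c t + δ0 c0) < W := by
    intro t
    induction t with
    | zero => intro _; exact ⟨0, by simpa [h0, wt_zero] using hWpos⟩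
    | succ t ih =>
      intro ht
      obtain ⟨c0, hc0⟩ := ih (le_trans (Nat.le_succ t) ht)
      have hstep' : wt (c t + c (t + 1)) = 1 := hstep t (lt_of_lt_of_le (Nat.lt_succ_self t) ht)
      have heq : c (t+1) + δ0 c0 = (c t + δ0 c0) + (c t + c (t+1)) := by
        funext k
        simpa using (key (c t k) (δ0 c0 k) (c (t+1) k)).symm
      have hle : wt (c (t+1) + δ0 c0) ≤ W := by
        rw [heq]
        calc wt _ ≤ wt (c t + δ0 c0) + wt (c t + c (t+1)) := wt_add_le _ _
          _ ≤ (W - 1) + 1 := by omega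
          _ = W := by omega
      have hsmall : (wt (c (t+1) + δ0 c0) : ℝ) ≤ α * n :=
        le_trans (by exact_mod_cast hle) hWle
      obtain ⟨c0', hc0', -⟩ := hexp _ hsmall
      have hδ : δ1 (c (t+1) + δ0 c0) = δ1 (c (t+1)) := by
        simp [map_add, hδ1δ0]
      rw [hδ] at hc0'
      have hlt : (wt (c (t+1) + δ0 c0 + δ0 c0') : ℝ) < W := by
        have := lt_of_le_of_lt hc0' (hcon (t+1) ht)
        exact lt_of_mul_lt_mul_left this hβ.le
      refine ⟨c0 + c0', ?_⟩
      have : c (t+1) + δ0 (c0 + c0') = c (t+1) + δ0 c0 + δ0 c0' := by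
        rw [map_add]; abel
      rw [this]
      exact_mod_cast hlt
  obtain ⟨c0, hc0⟩ := main T le_rfl
  have hsmall : (wt (c T + δ0 c0) : ℝ) ≤ α * n :=
    le_trans (by exact_mod_cast hc0.le) hWle
  obtain ⟨c0', hc0', -⟩ := hexp _ hsmall
  have hδ : δ1 (c T + δ0 c0) = 0 := by simp [map_add, hδ1δ0, hcocycle]
  rw [hδ] at hc0'
  have hz : wt (c T + δ0 c0 + δ0 c0') = 0 := by
    have h1 : β * (wt (c T + δ0 c0 + δ0 c0') : ℝ) ≤ 0 := by simpa [wt_zero] using hc0'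
    have h2 : (0:ℝ) ≤ (wt (c T + δ0 c0 + δ0 c0') : ℝ) := Nat.cast_nonneg _
    have hx : (wt (c T + δ0 c0 + δ0 c0') : ℝ) ≤ 0 := by nlinarith
    exact_mod_cast le_antisymm hx h2
  have := wt_eq_zero hz
  apply hnotcobound
  refine ⟨c0 + c0', ?_⟩
  have hsum : c T + (δ0 c0 + δ0 c0') = 0 := by rw [← add_assoc]; exact this
  have : δ0 c0 + δ0 c0' = c T := by
    have key2 : ∀ x y : ZMod 2, x + y = 0 → y = x := by decide
    funext k
    exact key2 _ _ (by simpa using congrFun hsum k)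
  rw [map_add, this]
end

section
/- (Functional inequality for the generalized repetition code, interior part.) Let b ≥ 1 and ℓ ≥ 1, and let G be the spider graph with vertex set V = {c} ∪ ({1,…,b} × {1,…,ℓ}), where the edges are {c,(i,1)} for each i, and {(i,p),(i,p+1)} for each i and 1 ≤ p < ℓ (b paths of length ℓ attached to a common center c; |V| = b·ℓ + 1). Then for every function g : V → {0,1}: (2ℓ+1) · (bℓ+1) · #{edges {x,y} of G with g(x) ≠ g(y)} ≥ #{ordered pairs (x,y) ∈ V × V with g(x) ≠ g(y)}. That is, the generalized repetition code graph of leaf-to-leaf length L = 2ℓ+1 satisfies the C = 1/L functional inequality: the edge-boundary sum is at least (C/|V|) times the sum over all pairs. -/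
open Finset

lemma spider_leg_bound (ℓ : ℕ) (hℓ : 1 ≤ ℓ) (c : Bool) (f : Fin ℓ → Bool) :
    (Finset.univ.filter (fun p : Fin ℓ => f p ≠ c)).card ≤
    ℓ * ((if c ≠ f ⟨0, hℓ⟩ then 1 else 0) +
      (Finset.univ.filter (fun pq : Fin ℓ × Fin ℓ =>
        (pq.2 : ℕ) = (pq.1 : ℕ) + 1 ∧ f pq.1 ≠ f pq.2)).card) := by
  classical
  set e := (if c ≠ f ⟨0, hℓ⟩ then 1 else 0) +
      (Finset.univ.filter (fun pq : Fin ℓ × Fin ℓ =>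
        (pq.2 : ℕ) = (pq.1 : ℕ) + 1 ∧ f pq.1 ≠ f pq.2)).card with he
  rcases Nat.eq_zero_or_pos e with h | h
  · have h1 : c = f ⟨0, hℓ⟩ := by
      by_contra hc
      simp [hc] at he
      omega
    have h2c : (Finset.univ.filter (fun pq : Fin ℓ × Fin ℓ =>
        (pq.2 : ℕ) = (pq.1 : ℕ) + 1 ∧ f pq.1 ≠ f pq.2)).card = 0 := by omega
    have h2 : ∀ pq : Fin ℓ × Fin ℓ, (pq.2 : ℕ) = (pq.1 : ℕ) + 1 → f pq.1 = f pq.2 := by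
      intro pq hpq
      by_contra hc
      have hmem : pq ∈ Finset.univ.filter (fun pq : Fin ℓ × Fin ℓ =>
          (pq.2 : ℕ) = (pq.1 : ℕ) + 1 ∧ f pq.1 ≠ f pq.2) := by
        simp [hpq, hc]
      have := Finset.card_eq_zero.mp h2c
      rw [this] at hmem
      exact absurd hmem (Finset.notMem_empty _)
    have key : ∀ k (hk : k < ℓ), f ⟨k, hk⟩ = c := by
      intro k
      induction k with
      | zero => intro hk; exact h1.symm
      | succ k ih =>
        intro hk
        have hk' : k < ℓ := by omega
        have := h2 (⟨k, hk'⟩, ⟨k + 1, hk⟩) rfl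
        rw [← this]
        exact ih hk'
    have hempty : Finset.univ.filter (fun p : Fin ℓ => f p ≠ c) = ∅ := by
      ext p
      simp only [Finset.mem_filter, Finset.mem_univ, true_and, Finset.notMem_empty,
        iff_false, not_not]
      exact key p.1 p.2
    rw [hempty]
    simp
  · calc (Finset.univ.filter (fun p : Fin ℓ => f p ≠ c)).card
        ≤ (Finset.univ : Finset (Fin ℓ)).card := Finset.card_filter_le _ _
      _ = ℓ := by simp
      _ = ℓ * 1 := by ring
      _ ≤ ℓ * e := Nat.mul_le_mul_left ℓ h

/-- Functional inequality (interior part) for the generalized repetition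
code. The spider graph has vertex set `{c} ∪ ({1,…,b} × {1,…,ℓ})` (encoded as
`Option (Fin b × Fin ℓ)` with `none` the center) with edges `{c,(i,1)}` and
`{(i,p),(i,p+1)}`. For every `g : V → {0,1}`,
`(2ℓ+1)·(bℓ+1)·#{disagreeing edges} ≥ #{disagreeing ordered pairs}`, i.e. the
`C = 1/L` functional inequality for `L = 2ℓ+1` and `|V| = bℓ+1`. -/
theorem spider_functional_inequality
    (b ℓ : ℕ) (hb : 1 ≤ b) (hℓ : 1 ≤ ℓ)
    (g : Option (Fin b × Fin ℓ) → Bool) :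
    (Finset.univ.filter
        (fun xy : Option (Fin b × Fin ℓ) × Option (Fin b × Fin ℓ) =>
          g xy.1 ≠ g xy.2)).card ≤
    (2 * ℓ + 1) * (b * ℓ + 1) *
      ((Finset.univ.filter (fun i : Fin b =>
          g none ≠ g (some (i, ⟨0, hℓ⟩)))).card
       + (Finset.univ.filter (fun t : Fin b × Fin ℓ × Fin ℓ =>
          (t.2.2 : ℕ) = (t.2.1 : ℕ) + 1 ∧
          g (some (t.1, t.2.1)) ≠ g (some (t.1, t.2.2)))).card) := by
  classical
  set n := b * ℓ + 1 with hn
  have hcard : Fintype.card (Option (Fin b × Fin ℓ)) = n := by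
    simp [hn]
  set B := Finset.univ.filter (fun v : Option (Fin b × Fin ℓ) => g v ≠ g none) with hB
  set E1 := (Finset.univ.filter (fun i : Fin b =>
      g none ≠ g (some (i, ⟨0, hℓ⟩)))).card with hE1
  set E2 := (Finset.univ.filter (fun t : Fin b × Fin ℓ × Fin ℓ =>
      (t.2.2 : ℕ) = (t.2.1 : ℕ) + 1 ∧
      g (some (t.1, t.2.1)) ≠ g (some (t.1, t.2.2)))).card with hE2
  -- Step 1: pairs ≤ 2 * n * B.card
  have hsub : (Finset.univ.filter
        (fun xy : Option (Fin b × Fin ℓ) × Option (Fin b × Fin ℓ) =>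
          g xy.1 ≠ g xy.2)) ⊆ (B ×ˢ Finset.univ) ∪ (Finset.univ ×ˢ B) := by
    rintro ⟨x, y⟩ hxy
    simp only [Finset.mem_filter, Finset.mem_univ, true_and] at hxy
    simp only [Finset.mem_union, Finset.mem_product, Finset.mem_filter, Finset.mem_univ,
      true_and, and_true, hB]
    by_cases hx : g x = g none
    · right; intro hy; exact hxy (hx.trans hy.symm)
    · left; exact hx
  have hstep1 : (Finset.univ.filter
        (fun xy : Option (Fin b × Fin ℓ) × Option (Fin b × Fin ℓ) =>
          g xy.1 ≠ g xy.2)).card ≤ 2 * n * B.card := by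
    calc _ ≤ ((B ×ˢ Finset.univ) ∪ (Finset.univ ×ˢ B)).card := Finset.card_le_card hsub
      _ ≤ (B ×ˢ (Finset.univ : Finset (Option (Fin b × Fin ℓ)))).card
          + ((Finset.univ : Finset (Option (Fin b × Fin ℓ))) ×ˢ B).card :=
        Finset.card_union_le _ _
      _ = B.card * n + n * B.card := by
        rw [Finset.card_product, Finset.card_product, Finset.card_univ, hcard]
      _ = 2 * n * B.card := by ring
  -- Step 2: decompose sums over legs
  have hm : B.card = ∑ i : Fin b,
      (Finset.univ.filter (fun p : Fin ℓ => g (some (i, p)) ≠ g none)).card := by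
    rw [hB, Finset.card_filter, Fintype.sum_option, Fintype.sum_prod_type]
    simp only [ne_eq, not_true_eq_false, if_false, zero_add]
    exact Finset.sum_congr rfl fun i _ => (Finset.card_filter _ _).symm
  have hE1' : E1 = ∑ i : Fin b, (if g none ≠ g (some (i, ⟨0, hℓ⟩)) then 1 else 0) := by
    rw [hE1, Finset.card_filter]
  have hE2' : E2 = ∑ i : Fin b,
      (Finset.univ.filter (fun pq : Fin ℓ × Fin ℓ =>
        (pq.2 : ℕ) = (pq.1 : ℕ) + 1 ∧ g (some (i, pq.1)) ≠ g (some (i, pq.2)))).card := by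
    rw [hE2, Finset.card_filter, Fintype.sum_prod_type]
    exact Finset.sum_congr rfl fun i _ => (Finset.card_filter _ _).symm
  -- Step 3: per-leg bound
  have hmE : B.card ≤ ℓ * (E1 + E2) := by
    rw [hm, hE1', hE2', ← Finset.sum_add_distrib, Finset.mul_sum]
    exact Finset.sum_le_sum (fun i _ =>
      spider_leg_bound ℓ hℓ (g none) (fun p => g (some (i, p))))
  -- Finish
  calc (Finset.univ.filter
        (fun xy : Option (Fin b × Fin ℓ) × Option (Fin b × Fin ℓ) =>
          g xy.1 ≠ g xy.2)).card
      ≤ 2 * n * B.card := hstep1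
    _ ≤ 2 * n * (ℓ * (E1 + E2)) := Nat.mul_le_mul_left _ hmE
    _ = 2 * ℓ * n * (E1 + E2) := by ring
    _ ≤ (2 * ℓ + 1) * n * (E1 + E2) :=
        Nat.mul_le_mul_right _ (Nat.mul_le_mul_right n (by omega))
end

section
/- (Functional inequality for the generalized repetition code, boundary part.) Let b ≥ 1 and ℓ ≥ 1, and let G be the spider graph with interior vertex set V = {c} ∪ ({1,…,b} × {1,…,ℓ}) and boundary vertex set V^∂ = {∂_1,…,∂_b}, where the edges are {c,(i,1)}, {(i,p),(i,p+1)} for 1 ≤ p < ℓ, and the boundary edges {(i,ℓ), ∂_i}. Then for every function g : V ∪ V^∂ → {0,1}: (2ℓ+1) · b · #{edges {x,y} of G (including boundary edges) with g(x) ≠ g(y)} ≥ #{pairs (x,y) with x ∈ V^∂, y ∈ V and g(x) ≠ g(y)}. That is, the generalized repetition code of length L = 2ℓ+1 with its b boundary vertices satisfies the C^∂ = 1/L boundary functional inequality. -/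
/-- Boundary functional inequality for the generalized repetition code.
The spider graph has interior vertices `{c} ∪ ({1,…,b} × {1,…,ℓ})` (encoded as
`Option (Fin b × Fin ℓ)`, `none` being the center) and boundary vertices `∂_1,…,∂_b`
(encoded as `Fin b`), with edges `{c,(i,1)}`, `{(i,p),(i,p+1)}`, and boundary edges
`{(i,ℓ),∂_i}`. For every `g : V ∪ V^∂ → {0,1}`,
`(2ℓ+1)·b·#{disagreeing edges} ≥ #{disagreeing pairs (x,y), x ∈ V^∂, y ∈ V}`, i.e. the
`C^∂ = 1/L` boundary functional inequality for `L = 2ℓ+1` and `|V^∂| = b`. -/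
theorem spider_boundary_functional_inequality
    (b ℓ : ℕ) (hb : 1 ≤ b) (hℓ : 1 ≤ ℓ)
    (g : Option (Fin b × Fin ℓ) ⊕ Fin b → Bool) :
    (Finset.univ.filter
        (fun p : Fin b × Option (Fin b × Fin ℓ) =>
          g (Sum.inr p.1) ≠ g (Sum.inl p.2))).card ≤
    (2 * ℓ + 1) * b *
      ((Finset.univ.filter (fun i : Fin b =>
          g (Sum.inl none) ≠ g (Sum.inl (some (i, ⟨0, hℓ⟩))))).card
       + (Finset.univ.filter (fun t : Fin b × Fin ℓ × Fin ℓ =>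
          (t.2.2 : ℕ) = (t.2.1 : ℕ) + 1 ∧
          g (Sum.inl (some (t.1, t.2.1))) ≠ g (Sum.inl (some (t.1, t.2.2))))).card
       + (Finset.univ.filter (fun i : Fin b =>
          g (Sum.inl (some (i, ⟨ℓ - 1, by omega⟩))) ≠ g (Sum.inr i))).card) := by
  classical
  set E1 : Finset (Fin b) := Finset.univ.filter (fun i : Fin b =>
      g (Sum.inl none) ≠ g (Sum.inl (some (i, ⟨0, hℓ⟩)))) with hE1
  set E2 : Finset (Fin b × Fin ℓ × Fin ℓ) := Finset.univ.filter
      (fun t : Fin b × Fin ℓ × Fin ℓ =>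
        (t.2.2 : ℕ) = (t.2.1 : ℕ) + 1 ∧
        g (Sum.inl (some (t.1, t.2.1))) ≠ g (Sum.inl (some (t.1, t.2.2)))) with hE2
  set E3 : Finset (Fin b) := Finset.univ.filter (fun i : Fin b =>
      g (Sum.inl (some (i, ⟨ℓ - 1, by omega⟩))) ≠ g (Sum.inr i)) with hE3
  set Bad : Finset (Fin b) := (E1 ∪ E2.image (fun t => t.1)) ∪ E3 with hBad
  -- good legs are constant, equal to the center value
  have hgood : ∀ j : Fin b, j ∉ Bad →
      (∀ p : Fin ℓ, g (Sum.inl (some (j, p))) = g (Sum.inl none)) ∧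
      g (Sum.inr j) = g (Sum.inl none) := by
    intro j hj
    rw [hBad] at hj
    simp only [Finset.mem_union, not_or] at hj
    obtain ⟨⟨h1, h2⟩, h3⟩ := hj
    rw [hE1, Finset.mem_filter] at h1
    rw [hE3, Finset.mem_filter] at h3
    simp only [Finset.mem_univ, true_and, not_not] at h1 h3
    have hstep : ∀ p p' : Fin ℓ, (p' : ℕ) = (p : ℕ) + 1 →
        g (Sum.inl (some (j, p))) = g (Sum.inl (some (j, p'))) := by
      intro p p' hpp'
      by_contra hne
      apply h2
      rw [Finset.mem_image]
      exact ⟨(j, p, p'), by rw [hE2, Finset.mem_filter]; exact ⟨Finset.mem_univ _, hpp', hne⟩, rfl⟩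
    have key : ∀ n : ℕ, ∀ hn : n < ℓ, g (Sum.inl (some (j, ⟨n, hn⟩))) = g (Sum.inl none) := by
      intro n
      induction n with
      | zero => intro hn; exact (h1).symm
      | succ m ih =>
        intro hn
        have hm : m < ℓ := by omega
        rw [← hstep ⟨m, hm⟩ ⟨m + 1, hn⟩ rfl]
        exact ih hm
    refine ⟨fun p => ?_, ?_⟩
    · have := key p.1 p.2
      simpa using this
    · rw [← h3]
      exact key (ℓ - 1) (by omega)
  -- disagreeing pairs are contained in Bad pairs
  set P : Finset (Fin b × Option (Fin b × Fin ℓ)) := Finset.univ.filter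
      (fun p : Fin b × Option (Fin b × Fin ℓ) =>
        g (Sum.inr p.1) ≠ g (Sum.inl p.2)) with hP
  set Vbad : Finset (Option (Fin b × Fin ℓ)) :=
      (Bad ×ˢ (Finset.univ : Finset (Fin ℓ))).image (fun x => some x) with hVbad
  have hsub : P ⊆ (Bad ×ˢ Finset.univ) ∪ (Finset.univ ×ˢ Vbad) := by
    intro ⟨i, v⟩ hiv
    rw [hP, Finset.mem_filter] at hiv
    by_contra hc
    simp only [Finset.mem_union, Finset.mem_product, Finset.mem_univ, true_and, and_true,
      not_or] at hc
    obtain ⟨hiBad, hvBad⟩ := hc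
    have hi := (hgood i hiBad).2
    rcases v with _ | ⟨j, p⟩
    · exact hiv.2 (by rw [hi])
    · have hj : j ∉ Bad := by
        intro hjB
        apply hvBad
        rw [hVbad, Finset.mem_image]
        exact ⟨(j, p), Finset.mem_product.mpr ⟨hjB, Finset.mem_univ _⟩, rfl⟩
      exact hiv.2 (by rw [hi, (hgood j hj).1 p])
  have hcard : P.card ≤ Bad.card * (b * ℓ + 1) + b * (Bad.card * ℓ) := by
    calc P.card ≤ ((Bad ×ˢ Finset.univ) ∪ (Finset.univ ×ˢ Vbad)).card :=
          Finset.card_le_card hsub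
      _ ≤ (Bad ×ˢ (Finset.univ : Finset (Option (Fin b × Fin ℓ)))).card
            + ((Finset.univ : Finset (Fin b)) ×ˢ Vbad).card := Finset.card_union_le _ _
      _ ≤ Bad.card * (b * ℓ + 1) + b * (Bad.card * ℓ) := by
          rw [Finset.card_product, Finset.card_product]
          gcongr
          · simp [Fintype.card_option]
          · simp
          · calc Vbad.card ≤ (Bad ×ˢ (Finset.univ : Finset (Fin ℓ))).card :=
                Finset.card_image_le
              _ = Bad.card * ℓ := by simp [Finset.card_product]
  have hBadle : Bad.card ≤ E1.card + E2.card + E3.card := by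
    calc Bad.card ≤ (E1 ∪ E2.image (fun t => t.1)).card + E3.card := Finset.card_union_le _ _
      _ ≤ (E1.card + (E2.image (fun t => t.1)).card) + E3.card := by
          gcongr; exact Finset.card_union_le _ _
      _ ≤ E1.card + E2.card + E3.card := by
          gcongr; exact Finset.card_image_le
  calc P.card ≤ Bad.card * (b * ℓ + 1) + b * (Bad.card * ℓ) := hcard
    _ ≤ (2 * ℓ + 1) * b * Bad.card := by nlinarith [Bad.card]
    _ ≤ (2 * ℓ + 1) * b * (E1.card + E2.card + E3.card) := by gcongr
end

section
/- (Poincaré-type functional inequality for the L × L grid, the single-face case of the local expansion lemma.) Let L ≥ 1 and consider the grid graph on the vertex set Fin L × Fin L, where (r,c) and (r',c') are adjacent iff they differ by exactly 1 in one coordinate and agree in the other. Then for every function g : Fin L × Fin L → {0,1}: L³ · #{adjacent pairs {u,v} with g(u) ≠ g(v)} ≥ #{ordered pairs (u,v) ∈ (Fin L × Fin L)² with g(u) ≠ g(v)}. That is, the L × L grid satisfies the C = 1/L functional inequality: the edge-boundary sum is at least (C/|V|) times the all-pairs sum, where |V| = L². -/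
/-- If a Bool-valued function on `Fin L` is not constant, it has a "step": adjacent
indices where it disagrees. -/
lemma exists_step {L : ℕ} (h : Fin L → Bool) {a b : Fin L} (hab : h a ≠ h b) :
    ∃ cc : Fin L × Fin L, ((cc.2 : ℕ) = (cc.1 : ℕ) + 1 ∧ h cc.1 ≠ h cc.2) := by
  by_contra hc
  push_neg at hc
  have hL : 0 < L := lt_of_le_of_lt (Nat.zero_le _) a.isLt
  have key : ∀ n (hn : n < L), h ⟨n, hn⟩ = h ⟨0, hL⟩ := by
    intro n
    induction n with
    | zero => intro hn; rfl
    | succ n ih =>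
      intro hn
      have h1 : h ⟨n, by omega⟩ = h ⟨n + 1, hn⟩ :=
        hc (⟨n, by omega⟩, ⟨n + 1, hn⟩) rfl
      exact h1.symm.trans (ih (by omega))
  have ha := key a.1 a.isLt
  have hb := key b.1 b.isLt
  rw [Fin.eta] at ha hb
  exact hab (ha.trans hb.symm)

/-- The encoding map for the grid functional inequality. -/
noncomputable def gridF (L : ℕ) (g : Fin L × Fin L → Bool)
    (p : (Fin L × Fin L) × (Fin L × Fin L)) :
    ((Fin L × Fin L × Fin L) ⊕ (Fin L × Fin L × Fin L)) × (Fin L × Fin L × Fin L) :=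
  if hh : g (p.1.1, p.1.2) ≠ g (p.1.1, p.2.2) then
    let cc := (exists_step (fun c => g (p.1.1, c)) hh).choose
    (Sum.inl (p.1.1, cc.1, cc.2), (p.1.2, p.2.1, p.2.2))
  else if hv : g (p.1.1, p.2.2) ≠ g (p.2.1, p.2.2) then
    let cc := (exists_step (fun r => g (r, p.2.2)) hv).choose
    (Sum.inr (cc.1, cc.2, p.2.2), (p.1.1, p.1.2, p.2.1))
  else (Sum.inl (p.1.1, p.1.2, p.2.1), (p.1.1, p.1.1, p.1.1))

/-- Poincaré-type functional inequality for the `L × L` grid graph on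
`Fin L × Fin L` with nearest-neighbour adjacency. For every `g : Fin L × Fin L → {0,1}`,
`L³ · #{disagreeing edges} ≥ #{disagreeing ordered pairs}`, i.e. the `C = 1/L`
functional inequality with `|V| = L²`. Horizontal edges are counted as triples
`(r, c, c')` with `c' = c+1`, vertical edges as triples `(r, r', c)` with `r' = r+1`. -/
theorem grid_functional_inequality
    (L : ℕ) (hL : 1 ≤ L) (g : Fin L × Fin L → Bool) :
    (Finset.univ.filter
        (fun uv : (Fin L × Fin L) × (Fin L × Fin L) => g uv.1 ≠ g uv.2)).card ≤
    L ^ 3 *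
      ((Finset.univ.filter (fun t : Fin L × Fin L × Fin L =>
          (t.2.2 : ℕ) = (t.2.1 : ℕ) + 1 ∧ g (t.1, t.2.1) ≠ g (t.1, t.2.2))).card
       + (Finset.univ.filter (fun t : Fin L × Fin L × Fin L =>
          (t.2.1 : ℕ) = (t.1 : ℕ) + 1 ∧ g (t.1, t.2.2) ≠ g (t.2.1, t.2.2))).card) := by
  classical
  set sH := (Finset.univ.filter (fun t : Fin L × Fin L × Fin L =>
          (t.2.2 : ℕ) = (t.2.1 : ℕ) + 1 ∧ g (t.1, t.2.1) ≠ g (t.1, t.2.2))) with hsH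
  set sV := (Finset.univ.filter (fun t : Fin L × Fin L × Fin L =>
          (t.2.1 : ℕ) = (t.1 : ℕ) + 1 ∧ g (t.1, t.2.2) ≠ g (t.2.1, t.2.2))) with hsV
  have hcard : (Finset.univ.filter
        (fun uv : (Fin L × Fin L) × (Fin L × Fin L) => g uv.1 ≠ g uv.2)).card ≤
      ((sH.disjSum sV) ×ˢ (Finset.univ : Finset (Fin L × Fin L × Fin L))).card := by
    apply Finset.card_le_card_of_injOn (gridF L g)
    · -- maps to
      intro p hp
      rw [Finset.mem_coe, Finset.mem_filter] at hp
      have hp2 : g (p.1.1, p.1.2) ≠ g (p.2.1, p.2.2) := by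
        simpa using hp.2
      rw [Finset.mem_coe, Finset.mem_product]
      refine ⟨?_, Finset.mem_univ _⟩
      by_cases hh : g (p.1.1, p.1.2) ≠ g (p.1.1, p.2.2)
      · rw [gridF, dif_pos hh]
        have hspec := (exists_step (fun c => g (p.1.1, c)) hh).choose_spec
        rw [Finset.inl_mem_disjSum, hsH, Finset.mem_filter]
        exact ⟨Finset.mem_univ _, hspec.1, hspec.2⟩
      · push_neg at hh
        have hv : g (p.1.1, p.2.2) ≠ g (p.2.1, p.2.2) := hh ▸ hp2
        rw [gridF, dif_neg (by simpa using hh), dif_pos hv]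
        have hspec := (exists_step (fun r => g (r, p.2.2)) hv).choose_spec
        rw [Finset.inr_mem_disjSum, hsV, Finset.mem_filter]
        exact ⟨Finset.mem_univ _, hspec.1, hspec.2⟩
    · -- injective on
      intro p hp q hq heq
      obtain ⟨⟨a, b⟩, c, d⟩ := p
      obtain ⟨⟨a', b'⟩, c', d'⟩ := q
      rw [Finset.mem_coe, Finset.mem_filter] at hp hq
      have hp2 : g (a, b) ≠ g (c, d) := by simpa using hp.2
      have hq2 : g (a', b') ≠ g (c', d') := by simpa using hq.2
      simp only [gridF] at heq
      split_ifs at heq with h1 h2 h3 h4 h5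
      all_goals
        simp only [Prod.mk.injEq, Sum.inl.injEq, Sum.inr.injEq, reduceCtorEq,
          false_and, and_false] at heq
      · obtain ⟨⟨ha, -⟩, hb, hc, hd⟩ := heq
        subst ha; subst hb; subst hc; subst hd; rfl
      · push_neg at h2 h3
        exact absurd (h2.trans h3) hq2
      · obtain ⟨⟨-, -, hd⟩, ha, hb, hc⟩ := heq
        subst ha; subst hb; subst hc; subst hd; rfl
      · push_neg at h1 h4
        exact absurd (h1.trans h4) hp2
      · push_neg at h1 h4
        exact absurd (h1.trans h4) hp2
  calc _ ≤ ((sH.disjSum sV) ×ˢ (Finset.univ : Finset (Fin L × Fin L × Fin L))).card := hcard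
    _ = (sH.card + sV.card) * (L * (L * L)) := by
        rw [Finset.card_product, Finset.card_disjSum, Finset.card_univ]
        simp [Fintype.card_prod]
    _ = L ^ 3 * (sH.card + sV.card) := by ring
end

section
/- (Boundary functional inequality for the L × L grid with one boundary column.) Let L ≥ 1. Consider the vertex set Fin L × Fin (L+1), with interior V = Fin L × Fin L (columns 0,…,L−1) and boundary V^∂ = {(r, L) : r ∈ Fin L} (the last column). The edges are: horizontal edges {(r,c),(r,c+1)} for all r ∈ Fin L and 0 ≤ c < L (including the edges attaching the boundary column), and vertical edges {(r,c),(r+1,c)} for 0 ≤ r < L−1 and c < L (interior columns only). Then for every g : Fin L × Fin (L+1) → {0,1}: L² · #{edges {x,y} with g(x) ≠ g(y)} ≥ #{pairs (x,y) with x ∈ V^∂, y ∈ V and g(x) ≠ g(y)}. That is, the grid with this boundary satisfies the C^∂ = 1/L boundary functional inequality, where |V^∂| = L. -/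
set_option maxHeartbeats 1000000

private lemma eq_last_of_no_step :
    ∀ (L : ℕ) (f : Fin (L + 1) → Bool) (n : ℕ) (c : Fin (L + 1)),
      L - (c : ℕ) ≤ n →
      (∀ k : Fin L, (c : ℕ) ≤ (k : ℕ) → f k.castSucc = f k.succ) →
      f c = f (Fin.last L) := by
  intro L f n
  induction n with
  | zero =>
    intro c hc _
    have hcL : (c : ℕ) ≤ L := Nat.lt_succ_iff.mp c.isLt
    have : c = Fin.last L := Fin.ext (by simp [Fin.last]; omega)
    rw [this]
  | succ n ih =>
    intro c hc hstep
    rcases Nat.lt_or_ge (c : ℕ) L with hlt | hge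
    · have e1 : c = (⟨(c : ℕ), hlt⟩ : Fin L).castSucc := Fin.ext (by simp)
      have h1 : f c = f (⟨(c : ℕ), hlt⟩ : Fin L).succ :=
        (congrArg f e1).trans (hstep _ (by simp))
      have h2 : f ((⟨(c : ℕ), hlt⟩ : Fin L).succ) = f (Fin.last L) := by
        apply ih _ (by simp [Fin.val_succ]; omega)
        intro k hk
        apply hstep
        simp [Fin.val_succ] at hk ⊢
        omega
      exact h1.trans h2
    · have hcL : (c : ℕ) ≤ L := Nat.lt_succ_iff.mp c.isLt
      have : c = Fin.last L := Fin.ext (by simp [Fin.last]; omega)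
      rw [this]

private lemma exists_vert_step {L : ℕ} (f : Fin L → Bool) (a b : Fin L)
    (hne : f a ≠ f b) :
    ∃ kk : Fin L × Fin L, (kk.2 : ℕ) = (kk.1 : ℕ) + 1 ∧ f kk.1 ≠ f kk.2 := by
  by_contra h
  push_neg at h
  have hpos : 0 < L := a.pos
  have claim : ∀ n (hn : n < L), f ⟨n, hn⟩ = f ⟨0, hpos⟩ := by
    intro n
    induction n with
    | zero => intro hn; rfl
    | succ n ihn =>
      intro hn
      have h1 : f (⟨n, by omega⟩ : Fin L) = f ⟨n + 1, hn⟩ :=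
        h (⟨n, by omega⟩, ⟨n + 1, hn⟩) rfl
      rw [← h1]
      exact ihn (by omega)
  have ha : f a = f ⟨0, hpos⟩ := by
    have := claim (a : ℕ) a.isLt
    simpa using this
  have hb : f b = f ⟨0, hpos⟩ := by
    have := claim (b : ℕ) b.isLt
    simpa using this
  exact hne (ha.trans hb.symm)

/-- Boundary functional inequality for the `L × L` grid with one boundary
column. Vertices are `Fin L × Fin (L+1)`; interior vertices have column `< L`, the
boundary is the last column `L`. Horizontal edges `{(r,c),(r,c+1)}` exist for all
`c < L` (including the attaching edges to the boundary column); vertical edges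
`{(r,c),(r+1,c)}` exist only for interior columns `c < L`. For every
`g : Fin L × Fin (L+1) → {0,1}`,
`L² · #{disagreeing edges} ≥ #{disagreeing pairs (x,y), x ∈ V^∂, y ∈ V}`, i.e. the
`C^∂ = 1/L` boundary functional inequality with `|V^∂| = L`. -/
theorem grid_boundary_functional_inequality
    (L : ℕ) (hL : 1 ≤ L) (g : Fin L × Fin (L + 1) → Bool) :
    (Finset.univ.filter
        (fun p : Fin L × (Fin L × Fin (L + 1)) =>
          (p.2.2 : ℕ) < L ∧ g (p.1, Fin.last L) ≠ g p.2)).card ≤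
    L ^ 2 *
      ((Finset.univ.filter (fun t : Fin L × Fin (L + 1) × Fin (L + 1) =>
          (t.2.2 : ℕ) = (t.2.1 : ℕ) + 1 ∧ g (t.1, t.2.1) ≠ g (t.1, t.2.2))).card
       + (Finset.univ.filter (fun t : Fin L × Fin L × Fin (L + 1) =>
          (t.2.1 : ℕ) = (t.1 : ℕ) + 1 ∧ (t.2.2 : ℕ) < L ∧
            g (t.1, t.2.2) ≠ g (t.2.1, t.2.2))).card) := by
  classical
  set S : Finset (Fin L × (Fin L × Fin (L + 1))) :=
    Finset.univ.filter
      (fun p : Fin L × (Fin L × Fin (L + 1)) =>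
        (p.2.2 : ℕ) < L ∧ g (p.1, Fin.last L) ≠ g p.2) with hS
  set HE : Finset (Fin L × Fin (L + 1) × Fin (L + 1)) :=
    Finset.univ.filter (fun t : Fin L × Fin (L + 1) × Fin (L + 1) =>
      (t.2.2 : ℕ) = (t.2.1 : ℕ) + 1 ∧ g (t.1, t.2.1) ≠ g (t.1, t.2.2)) with hHE
  set VE : Finset (Fin L × Fin L × Fin (L + 1)) :=
    Finset.univ.filter (fun t : Fin L × Fin L × Fin (L + 1) =>
      (t.2.1 : ℕ) = (t.1 : ℕ) + 1 ∧ (t.2.2 : ℕ) < L ∧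
        g (t.1, t.2.2) ≠ g (t.2.1, t.2.2)) with hVE
  set P : (Fin L × (Fin L × Fin (L + 1))) → Prop :=
    fun p => ∃ k : Fin L, (p.2.2 : ℕ) ≤ (k : ℕ) ∧ g (p.1, k.castSucc) ≠ g (p.1, k.succ)
    with hP
  have hsplit : (S.filter P).card + (S.filter (fun p => ¬ P p)).card = S.card :=
    Finset.card_filter_add_card_filter_not (p := P)
  have hSmem : ∀ p ∈ S, (p.2.2 : ℕ) < L ∧ g (p.1, Fin.last L) ≠ g p.2 := by
    intro p hp
    exact (Finset.mem_filter.mp hp).2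
  -- case A: horizontal witness
  have hA : (S.filter P).card ≤ HE.card * (L * L) := by
    have hcard : (HE ×ˢ (Finset.univ : Finset (Fin L × Fin L))).card = HE.card * (L * L) := by
      rw [Finset.card_product]
      simp [Fintype.card_prod]
    rw [← hcard]
    apply Finset.card_le_card_of_injOn
      (fun p => if h : P p then
          ((p.1, (h.choose.castSucc, h.choose.succ)),
            (p.2.1, (⟨(p.2.2 : ℕ) % L, Nat.mod_lt _ hL⟩ : Fin L)))
        else (((⟨0, hL⟩ : Fin L), (0, 0)), ((⟨0, hL⟩ : Fin L), (⟨0, hL⟩ : Fin L))))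
    · intro p hp
      have hpP : P p := (Finset.mem_filter.mp hp).2
      simp only [dif_pos hpP]
      rw [Finset.mem_coe, Finset.mem_product]
      refine ⟨?_, Finset.mem_univ _⟩
      rw [hHE, Finset.mem_filter]
      refine ⟨Finset.mem_univ _, ?_, hpP.choose_spec.2⟩
      simp
    · rintro ⟨p1, p2, p3⟩ hp ⟨q1, q2, q3⟩ hq heq
      have hpP : P (p1, p2, p3) := (Finset.mem_filter.mp (Finset.mem_coe.mp hp)).2
      have hqP : P (q1, q2, q3) := (Finset.mem_filter.mp (Finset.mem_coe.mp hq)).2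
      have hp3 : (p3 : ℕ) < L :=
        (hSmem _ (Finset.mem_of_mem_filter _ (Finset.mem_coe.mp hp))).1
      have hq3 : (q3 : ℕ) < L :=
        (hSmem _ (Finset.mem_of_mem_filter _ (Finset.mem_coe.mp hq))).1
      simp only [dif_pos hpP, dif_pos hqP, Prod.mk.injEq] at heq
      obtain ⟨⟨e1, _⟩, e2, e3⟩ := heq
      have e3' : (p3 : ℕ) % L = (q3 : ℕ) % L := congrArg Fin.val e3
      rw [Nat.mod_eq_of_lt hp3, Nat.mod_eq_of_lt hq3] at e3'
      simp only [Prod.mk.injEq]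
      exact ⟨e1, e2, Fin.ext e3'⟩
  -- case B: vertical witness
  set Q : (Fin L × (Fin L × Fin (L + 1))) → Prop :=
    fun p => ∃ kk : Fin L × Fin L, (kk.2 : ℕ) = (kk.1 : ℕ) + 1 ∧
      g (kk.1, p.2.2) ≠ g (kk.2, p.2.2) with hQ
  have hBQ : ∀ p ∈ S.filter (fun p => ¬ P p), Q p := by
    rintro ⟨p1, p2, p3⟩ hp
    have hnp : ¬ P (p1, p2, p3) := (Finset.mem_filter.mp hp).2
    obtain ⟨hp3, hne⟩ := hSmem _ (Finset.mem_of_mem_filter _ hp)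
    have hhor : g (p1, p3) = g (p1, Fin.last L) := by
      apply eq_last_of_no_step L (fun j => g (p1, j)) L p3 (by omega)
      intro k hk
      by_contra hcon
      exact hnp ⟨k, hk, hcon⟩
    have hvert : g (p1, p3) ≠ g (p2, p3) := by
      rw [hhor]; exact hne
    exact exists_vert_step (fun r => g (r, p3)) p1 p2 hvert
  have hB : (S.filter (fun p => ¬ P p)).card ≤ VE.card * (L * L) := by
    have hcard : (VE ×ˢ (Finset.univ : Finset (Fin L × Fin L))).card = VE.card * (L * L) := by
      rw [Finset.card_product]
      simp [Fintype.card_prod]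
    rw [← hcard]
    apply Finset.card_le_card_of_injOn
      (fun p => if h : Q p then
          ((h.choose.1, (h.choose.2, p.2.2)), (p.1, p.2.1))
        else (((⟨0, hL⟩ : Fin L), ((⟨0, hL⟩ : Fin L), 0)),
          ((⟨0, hL⟩ : Fin L), (⟨0, hL⟩ : Fin L))))
    · intro p hp
      have hpQ : Q p := hBQ p hp
      have hp3 : (p.2.2 : ℕ) < L :=
        (hSmem _ (Finset.mem_of_mem_filter _ hp)).1
      simp only [dif_pos hpQ]
      rw [Finset.mem_coe, Finset.mem_product]
      refine ⟨?_, Finset.mem_univ _⟩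
      rw [hVE, Finset.mem_filter]
      exact ⟨Finset.mem_univ _, hpQ.choose_spec.1, hp3, hpQ.choose_spec.2⟩
    · rintro ⟨p1, p2, p3⟩ hp ⟨q1, q2, q3⟩ hq heq
      have hpQ : Q (p1, p2, p3) := hBQ _ (Finset.mem_coe.mp hp)
      have hqQ : Q (q1, q2, q3) := hBQ _ (Finset.mem_coe.mp hq)
      simp only [dif_pos hpQ, dif_pos hqQ, Prod.mk.injEq] at heq
      obtain ⟨⟨_, _, e3⟩, e1, e2⟩ := heq
      simp only [Prod.mk.injEq]
      exact ⟨e1, e2, e3⟩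
  calc S.card = (S.filter P).card + (S.filter (fun p => ¬ P p)).card := hsplit.symm
    _ ≤ HE.card * (L * L) + VE.card * (L * L) := Nat.add_le_add hA hB
    _ = L ^ 2 * (HE.card + VE.card) := by ring
end

section
/- (Functional inequality for several grid faces glued along a common seam; the non-product case of the local expansion lemma.) Let k ≥ 1 and L ≥ 1, and let B(k,L) be the 'book' graph: the vertex set is the disjoint union of a spine Fin L and k pages Fin k × Fin L × Fin (L−1); the edges are: spine edges {r, r+1} for 0 ≤ r < L−1; attaching edges {r, (p,r,0)} for every page p and row r; horizontal page edges {(p,r,c),(p,r,c+1)} for 0 ≤ c < L−2; and vertical page edges {(p,r,c),(p,r+1,c)} for 0 ≤ r < L−1. (Thus each page together with the spine forms an L × L grid, and all k grids share the spine column.) Then for every function g from the vertices of B(k,L) to {0,1}: 16 · k² · L³ · #{edges {x,y} of B(k,L) with g(x) ≠ g(y)} ≥ #{ordered pairs (x,y) of vertices with g(x) ≠ g(y)}. In particular, for bounded k the book graph satisfies a C = Θ(1/L) functional inequality. -/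
open Finset Sum

section
variable {k L : ℕ}

/-- Vertices of the book graph. -/
abbrev BkV (k L : ℕ) := Fin L ⊕ (Fin k × Fin L × Fin (L - 1))

/-- Pool of (potential) edges: spine, attaching, horizontal, vertical. -/
abbrev BkE (k L : ℕ) :=
  (Fin L × Fin L) ⊕ ((Fin k × Fin L × Fin (L - 1)) ⊕
    ((Fin k × Fin L × Fin (L - 1) × Fin (L - 1)) ⊕ (Fin k × Fin L × Fin L × Fin (L - 1))))

/-- Disagreeing-edge predicate. -/
def bkP (g : BkV k L → Bool) : BkE k L → Prop
  | inl t => (t.2 : ℕ) = (t.1 : ℕ) + 1 ∧ g (inl t.1) ≠ g (inl t.2)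
  | inr (inl t) => (t.2.2 : ℕ) = 0 ∧ g (inl t.2.1) ≠ g (inr t)
  | inr (inr (inl t)) => (t.2.2.2 : ℕ) = (t.2.2.1 : ℕ) + 1 ∧
      g (inr (t.1, t.2.1, t.2.2.1)) ≠ g (inr (t.1, t.2.1, t.2.2.2))
  | inr (inr (inr t)) => (t.2.2.1 : ℕ) = (t.2.1 : ℕ) + 1 ∧
      g (inr (t.1, t.2.1, t.2.2.2)) ≠ g (inr (t.1, t.2.2.1, t.2.2.2))

def bkRow : BkV k L → Fin L := Sum.elim id fun t => t.2.1

/-- Structural constraint linking a pair to the chosen edge. -/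
def bkStruct (pr : BkV k L × BkV k L) : BkE k L → Prop
  | inl _ => ∃ r0, pr.1 = inl r0
  | inr (inl t) => ((∃ r0 c0, pr.1 = inr (t.1, r0, c0)) ∧ bkRow pr.2 = t.2.1) ∨
      (∃ c0, pr.2 = inr (t.1, t.2.1, c0))
  | inr (inr (inl t)) => ((∃ r0 c0, pr.1 = inr (t.1, r0, c0)) ∧ bkRow pr.2 = t.2.1) ∨
      (∃ c0, pr.2 = inr (t.1, t.2.1, c0))
  | inr (inr (inr t)) => ∃ r0, pr.1 = inr (t.1, r0, t.2.2.2)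

end
section
variable {k L : ℕ}

lemma bk_const (f : ℕ → Bool) (a b : ℕ) (hab : a ≤ b)
    (h : ∀ i, a ≤ i → i < b → f i = f (i + 1)) : f a = f b := by
  induction b, hab using Nat.le_induction with
  | base => rfl
  | succ n hn ih =>
    rw [ih fun i hi hi2 => h i hi (by omega)]
    exact h n hn (by omega)

lemma bk_ivt (f : ℕ → Bool) (a b : ℕ) (h : f a ≠ f b) :
    ∃ i, i < max a b ∧ f i ≠ f (i + 1) := by
  by_contra hc
  push_neg at hc
  rcases le_total a b with hab | hab
  · exact h (bk_const f a b hab fun i _ hi2 => hc i (by omega))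
  · exact h ((bk_const f b a hab fun i _ hi2 => hc i (by omega)).symm)

lemma bk_filter_sum {α β : Type*} [Fintype α] [Fintype β] (P : α ⊕ β → Prop)
    [DecidablePred P] :
    (Finset.univ.filter P).card =
      (Finset.univ.filter fun a => P (inl a)).card +
      (Finset.univ.filter fun b => P (inr b)).card := by
  rw [← Finset.card_disjSum]
  congr 1
  ext x
  cases x <;> simp [Finset.mem_disjSum]

lemma bk_scan_spine (g : BkV k L → Bool) (r1 r2 : Fin L)
    (h : g (inl r1) ≠ g (inl r2)) :
    ∃ t : Fin L × Fin L, (t.2 : ℕ) = (t.1 : ℕ) + 1 ∧ g (inl t.1) ≠ g (inl t.2) := by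
  set f : ℕ → Bool := fun n => if hn : n < L then g (inl ⟨n, hn⟩) else false with hf
  have hfr : ∀ r : Fin L, f (r : ℕ) = g (inl r) := by
    intro r; simp [hf, r.isLt]
  obtain ⟨i, hi, hne⟩ := bk_ivt f r1 r2 (by rw [hfr, hfr]; exact h)
  have hiL : i + 1 < L := by
    have := max_lt r1.isLt r2.isLt
    omega
  refine ⟨(⟨i, by omega⟩, ⟨i + 1, hiL⟩), rfl, ?_⟩
  simpa [hf, hiL, Nat.lt_of_succ_lt hiL] using hne

lemma bk_scan_vert (g : BkV k L → Bool) (p : Fin k) (c : Fin (L - 1)) (r1 r2 : Fin L)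
    (h : g (inr (p, r1, c)) ≠ g (inr (p, r2, c))) :
    ∃ t : Fin k × Fin L × Fin L × Fin (L - 1), t.1 = p ∧ t.2.2.2 = c ∧
      (t.2.2.1 : ℕ) = (t.2.1 : ℕ) + 1 ∧
      g (inr (t.1, t.2.1, t.2.2.2)) ≠ g (inr (t.1, t.2.2.1, t.2.2.2)) := by
  set f : ℕ → Bool := fun n => if hn : n < L then g (inr (p, ⟨n, hn⟩, c)) else false with hf
  have hfr : ∀ r : Fin L, f (r : ℕ) = g (inr (p, r, c)) := by
    intro r; simp [hf, r.isLt]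
  obtain ⟨i, hi, hne⟩ := bk_ivt f r1 r2 (by rw [hfr, hfr]; exact h)
  have hiL : i + 1 < L := by
    have := max_lt r1.isLt r2.isLt
    omega
  refine ⟨(p, ⟨i, by omega⟩, ⟨i + 1, hiL⟩, c), rfl, rfl, rfl, ?_⟩
  simpa [hf, hiL, Nat.lt_of_succ_lt hiL] using hne

/-- The unified row line of page `p`, row `r`: index `0` is the spine vertex,
index `j+1` is column `j` of the page. -/
def bkLine (p : Fin k) (r : Fin L) : ℕ → BkV k L
  | 0 => inl r
  | (m + 1) => if hm : m < L - 1 then inr (p, r, ⟨m, hm⟩) else inl r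

lemma bk_scan_row (g : BkV k L → Bool) (p : Fin k) (r : Fin L) (a b : ℕ)
    (ha : a ≤ L - 1) (hb : b ≤ L - 1)
    (h : g (bkLine p r a) ≠ g (bkLine p r b)) :
    (∃ t : Fin k × Fin L × Fin (L - 1), t.1 = p ∧ t.2.1 = r ∧
        (t.2.2 : ℕ) = 0 ∧ g (inl t.2.1) ≠ g (inr t)) ∨
    (∃ t : Fin k × Fin L × Fin (L - 1) × Fin (L - 1), t.1 = p ∧ t.2.1 = r ∧
        (t.2.2.2 : ℕ) = (t.2.2.1 : ℕ) + 1 ∧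
        g (inr (t.1, t.2.1, t.2.2.1)) ≠ g (inr (t.1, t.2.1, t.2.2.2))) := by
  obtain ⟨i, hi, hne⟩ := bk_ivt (fun n => g (bkLine p r n)) a b h
  have hiL : i + 1 ≤ L - 1 := by omega
  match i, hne with
  | 0, hne =>
    left
    have h0 : (0 : ℕ) < L - 1 := by omega
    refine ⟨(p, r, ⟨0, h0⟩), rfl, rfl, rfl, ?_⟩
    simpa [bkLine, h0] using hne
  | (j + 1), hne =>
    right
    have hj : j < L - 1 := by omega
    have hj1 : j + 1 < L - 1 := by omega
    refine ⟨(p, r, ⟨j, hj⟩, ⟨j + 1, hj1⟩), rfl, rfl, rfl, ?_⟩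
    simpa [bkLine, hj, hj1] using hne

end
section
variable {k L : ℕ}

lemma bkLine_coe (p : Fin k) (r : Fin L) (c : Fin (L - 1)) :
    bkLine p r ((c : ℕ) + 1) = inr (p, r, c) := by
  simp [bkLine, c.isLt]

lemma bkLine_zero (p : Fin k) (r : Fin L) : bkLine p r 0 = inl r := rfl

lemma bk_exists (g : BkV k L → Bool) (pr : BkV k L × BkV k L)
    (h : g pr.1 ≠ g pr.2) : ∃ e : BkE k L, bkP g e ∧ bkStruct pr e := by
  obtain ⟨x, y⟩ := pr
  simp only at h
  match x with
  | inl r1 =>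
    -- x on the spine
    have hstruct : ∃ r0, (inl r1 : BkV k L) = inl r0 := ⟨r1, rfl⟩
    match y with
    | inl r2 =>
      obtain ⟨t, ht⟩ := bk_scan_spine g r1 r2 h
      exact ⟨inl t, ht, hstruct⟩
    | inr (p, r2, c2) =>
      by_cases hs : g (inl r1) = g (inl r2)
      · -- disagreement along the row line of page p at row r2
        have h2 : g (bkLine p r2 0) ≠ g (bkLine p r2 ((c2 : ℕ) + 1)) := by
          rw [bkLine_zero, bkLine_coe]
          exact fun hc => h (hs.trans hc)
        rcases bk_scan_row g p r2 0 ((c2 : ℕ) + 1) (by omega) (by omega) h2 with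
          ⟨t, htp, htr, ht⟩ | ⟨t, htp, htr, ht⟩
        · exact ⟨inr (inl t), ht, Or.inr ⟨c2, by rw [htp, htr]⟩⟩
        · exact ⟨inr (inr (inl t)), ht, Or.inr ⟨c2, by rw [htp, htr]⟩⟩
      · obtain ⟨t, ht⟩ := bk_scan_spine g r1 r2 hs
        exact ⟨inl t, ht, hstruct⟩
  | inr (p1, r1, c1) =>
    set ry : Fin L := bkRow y with hry
    by_cases hm : g (inr (p1, r1, c1)) = g (inr (p1, ry, c1))
    · -- no vertical disagreement used; pass through row ry
      have hmy : g (inr (p1, ry, c1)) ≠ g y := fun hc => h (hm.trans hc)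
      by_cases hs : g (inr (p1, ry, c1)) = g (inl ry)
      · -- disagreement between spine at ry and y
        have hsy : g (inl ry) ≠ g y := fun hc => hmy (hs.trans hc)
        match y, hsy, hry with
        | inl r2, hsy, hry =>
          have he : ry = r2 := by simpa [bkRow] using hry
          exact absurd (by rw [he]) hsy
        | inr (p2, r2, c2), hsy, hry =>
          have hry2 : ry = r2 := by rw [hry]; rfl
          have h2 : g (bkLine p2 r2 0) ≠ g (bkLine p2 r2 ((c2 : ℕ) + 1)) := by
            rw [bkLine_zero, bkLine_coe]
            exact hry2 ▸ hsy
          rcases bk_scan_row g p2 r2 0 ((c2 : ℕ) + 1) (by omega) (by omega) h2 with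
            ⟨t, htp, htr, ht⟩ | ⟨t, htp, htr, ht⟩
          · exact ⟨inr (inl t), ht, Or.inr ⟨c2, by rw [htp, htr]⟩⟩
          · exact ⟨inr (inr (inl t)), ht, Or.inr ⟨c2, by rw [htp, htr]⟩⟩
      · -- disagreement along the row line of page p1 at row ry
        have h2 : g (bkLine p1 ry ((c1 : ℕ) + 1)) ≠ g (bkLine p1 ry 0) := by
          rw [bkLine_zero, bkLine_coe]; exact hs
        rcases bk_scan_row g p1 ry ((c1 : ℕ) + 1) 0 (by omega) (by omega) h2 with
          ⟨t, htp, htr, ht⟩ | ⟨t, htp, htr, ht⟩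
        · exact ⟨inr (inl t), ht, Or.inl ⟨⟨r1, c1, by rw [htp]⟩, by rw [htr]⟩⟩
        · exact ⟨inr (inr (inl t)), ht, Or.inl ⟨⟨r1, c1, by rw [htp]⟩, by rw [htr]⟩⟩
    · -- vertical disagreement in column c1 of page p1
      obtain ⟨t, htp, htc, ht⟩ := bk_scan_vert g p1 c1 r1 ry hm
      exact ⟨inr (inr (inr t)), ht, ⟨r1, by rw [htp, htc]⟩⟩
section
variable {k L : ℕ}

lemma bk_arith_aux (hk : 1 ≤ k) (c : ℕ) (hc : 1 ≤ c) (m : ℕ) :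
    1 + k * m ≤ (c * (k * k)) * (m + 1) := by
  have hkk : 1 ≤ k * k := by simpa using Nat.mul_le_mul hk hk
  have hkk' : k ≤ k * k := Nat.le_mul_of_pos_left k (by omega)
  calc 1 + k * m ≤ k * k + (k * k) * m :=
        Nat.add_le_add hkk (Nat.mul_le_mul_right m hkk')
    _ = (k * k) * (m + 1) := by ring
    _ ≤ (c * (k * k)) * (m + 1) :=
        Nat.mul_le_mul_right _ (Nat.le_mul_of_pos_left _ (by omega))

lemma bk_arith1 (hk : 1 ≤ k) (hL : 1 ≤ L) :
    L * (L + k * (L * (L - 1))) ≤ 16 * k ^ 2 * L ^ 3 := by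
  obtain ⟨m, rfl⟩ : ∃ m, L = m + 1 := ⟨L - 1, by omega⟩
  simp only [Nat.add_sub_cancel]
  calc (m + 1) * ((m + 1) + k * ((m + 1) * m))
      = ((m + 1) * (m + 1)) * (1 + k * m) := by ring
    _ ≤ ((m + 1) * (m + 1)) * ((16 * (k * k)) * (m + 1)) :=
        Nat.mul_le_mul_left _ (bk_arith_aux hk 16 (by omega) m)
    _ = 16 * k ^ 2 * (m + 1) ^ 3 := by ring

lemma bk_arith2 (hk : 1 ≤ k) (hL : 1 ≤ L) :
    L * (L - 1) * (k * (L - 1) + 1) + (L + k * (L * (L - 1))) * (L - 1)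
      ≤ 16 * k ^ 2 * L ^ 3 := by
  obtain ⟨m, rfl⟩ : ∃ m, L = m + 1 := ⟨L - 1, by omega⟩
  simp only [Nat.add_sub_cancel]
  calc (m + 1) * m * (k * m + 1) + ((m + 1) + k * ((m + 1) * m)) * m
      = (2 * (m * (m + 1))) * (1 + k * m) := by ring
    _ ≤ (2 * ((m + 1) * (m + 1))) * ((8 * (k * k)) * (m + 1)) :=
        Nat.mul_le_mul
          (Nat.mul_le_mul_left 2 (Nat.mul_le_mul_right (m + 1) (by omega)))
          (bk_arith_aux hk 8 (by omega) m)
    _ = 16 * k ^ 2 * (m + 1) ^ 3 := by ring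

open scoped Classical in
lemma bk_fiber_left (hk : 1 ≤ k) (hL : 1 ≤ L) (e : Fin L × Fin L) :
    (Finset.univ.filter fun pr : BkV k L × BkV k L =>
        bkStruct pr (inl e)).card ≤ 16 * k ^ 2 * L ^ 3 := by
  have hsub : (Finset.univ.filter fun pr : BkV k L × BkV k L => bkStruct pr (inl e)) ⊆
      (Finset.univ.map ⟨(inl : Fin L → BkV k L), inl_injective⟩) ×ˢ Finset.univ := by
    intro pr hpr
    rw [Finset.mem_filter] at hpr
    obtain ⟨r0, hr0⟩ := hpr.2
    rw [Finset.mem_product]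
    exact ⟨by simp [hr0], Finset.mem_univ _⟩
  calc _ ≤ _ := Finset.card_le_card hsub
    _ ≤ 16 * k ^ 2 * L ^ 3 := by
        rw [Finset.card_product, Finset.card_map]
        simpa using bk_arith1 hk hL

open scoped Classical in
lemma bk_fiber_vert (hk : 1 ≤ k) (hL : 1 ≤ L) (t : Fin k × Fin L × Fin L × Fin (L - 1)) :
    (Finset.univ.filter fun pr : BkV k L × BkV k L =>
        bkStruct pr (inr (inr (inr t)))).card ≤ 16 * k ^ 2 * L ^ 3 := by
  have hsub : (Finset.univ.filter fun pr : BkV k L × BkV k L =>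
        bkStruct pr (inr (inr (inr t)))) ⊆
      (Finset.univ.map ⟨fun r0 : Fin L => (inr (t.1, r0, t.2.2.2) : BkV k L),
        fun a b hab => by simpa using hab⟩) ×ˢ Finset.univ := by
    intro pr hpr
    rw [Finset.mem_filter] at hpr
    obtain ⟨r0, hr0⟩ := hpr.2
    rw [Finset.mem_product]
    refine ⟨?_, Finset.mem_univ _⟩
    rw [Finset.mem_map]
    exact ⟨r0, Finset.mem_univ _, hr0.symm⟩
  calc _ ≤ _ := Finset.card_le_card hsub
    _ ≤ 16 * k ^ 2 * L ^ 3 := by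
        rw [Finset.card_product, Finset.card_map]
        simpa using bk_arith1 hk hL

open scoped Classical in
lemma bk_fiber_row (hk : 1 ≤ k) (hL : 1 ≤ L) (p : Fin k) (r : Fin L) :
    (Finset.univ.filter fun pr : BkV k L × BkV k L =>
        ((∃ r0 c0, pr.1 = inr (p, r0, c0)) ∧ bkRow pr.2 = r) ∨
          (∃ c0, pr.2 = inr (p, r, c0))).card ≤ 16 * k ^ 2 * L ^ 3 := by
  set F1 : Finset (BkV k L × BkV k L) :=
    (Finset.univ.map ⟨fun q : Fin L × Fin (L - 1) => (inr (p, q.1, q.2) : BkV k L),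
      fun a b hab => by simpa [Prod.ext_iff] using hab⟩) ×ˢ (Finset.univ.filter fun v : BkV k L => bkRow v = r)
    with hF1
  set F2 : Finset (BkV k L × BkV k L) :=
    Finset.univ ×ˢ (Finset.univ.map ⟨fun c0 : Fin (L - 1) => (inr (p, r, c0) : BkV k L),
      fun a b hab => by simpa using hab⟩) with hF2
  have hsub : (Finset.univ.filter fun pr : BkV k L × BkV k L =>
        ((∃ r0 c0, pr.1 = inr (p, r0, c0)) ∧ bkRow pr.2 = r) ∨
          (∃ c0, pr.2 = inr (p, r, c0))) ⊆ F1 ∪ F2 := by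
    intro pr hpr
    rw [Finset.mem_filter] at hpr
    rcases hpr.2 with ⟨⟨r0, c0, h1⟩, h2⟩ | ⟨c0, h1⟩
    · apply Finset.mem_union_left
      rw [hF1, Finset.mem_product]
      constructor
      · rw [Finset.mem_map]
        exact ⟨(r0, c0), Finset.mem_univ _, h1.symm⟩
      · rw [Finset.mem_filter]
        exact ⟨Finset.mem_univ _, h2⟩
    · apply Finset.mem_union_right
      rw [hF2, Finset.mem_product]
      refine ⟨Finset.mem_univ _, ?_⟩
      rw [Finset.mem_map]
      exact ⟨c0, Finset.mem_univ _, h1.symm⟩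
  have hrowcard : (Finset.univ.filter fun v : BkV k L => bkRow v = r).card
      ≤ k * (L - 1) + 1 := by
    have := Finset.card_le_card_of_injOn
      (f := fun v : BkV k L => Sum.elim (fun _ => (none : Option (Fin k × Fin (L - 1))))
        (fun t => some (t.1, t.2.2)) v)
      (s := Finset.univ.filter fun v : BkV k L => bkRow v = r)
      (t := (Finset.univ : Finset (Option (Fin k × Fin (L - 1)))))
      (fun a _ => Finset.mem_univ _) ?_
    · simpa using this
    · intro u hu v hv huv
      simp only [Finset.coe_filter, Set.mem_setOf_eq, Finset.mem_univ, true_and] at hu hv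
      match u, v with
      | inl a, inl b =>
        simp only [bkRow, Sum.elim_inl, id_eq] at hu hv
        rw [hu, hv]
      | inl a, inr b => simp at huv
      | inr a, inl b => simp at huv
      | inr a, inr b =>
        simp only [Sum.elim_inr, Option.some.injEq, Prod.mk.injEq] at huv
        simp only [bkRow, Sum.elim_inr] at hu hv
        obtain ⟨a1, a2, a3⟩ := a
        obtain ⟨b1, b2, b3⟩ := b
        simp only at hu hv huv
        rw [huv.1, huv.2, hu, hv]
  calc _ ≤ (F1 ∪ F2).card := Finset.card_le_card hsub
    _ ≤ F1.card + F2.card := Finset.card_union_le _ _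
    _ ≤ L * (L - 1) * (k * (L - 1) + 1) + (L + k * (L * (L - 1))) * (L - 1) := by
        rw [hF1, hF2, Finset.card_product, Finset.card_product, Finset.card_map,
          Finset.card_map]
        have h1 : (Finset.univ : Finset (Fin L × Fin (L - 1))).card = L * (L - 1) := by simp
        have h2 : (Finset.univ : Finset (BkV k L)).card = L + k * (L * (L - 1)) := by simp
        have h3 : (Finset.univ : Finset (Fin (L - 1))).card = L - 1 := by simp
        rw [h1, h2, h3]
        exact Nat.add_le_add (Nat.mul_le_mul_left _ hrowcard) le_rfl
    _ ≤ 16 * k ^ 2 * L ^ 3 := bk_arith2 hk hL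

end

/-- Functional inequality for the book graph `B(k,L)`: `k` pages
(`Fin k × Fin L × Fin (L-1)`) glued along a common spine (`Fin L`), each page together
with the spine forming an `L × L` grid. Edges: spine edges `{r,r+1}`, attaching edges
`{r,(p,r,0)}`, horizontal page edges `{(p,r,c),(p,r,c+1)}`, and vertical page edges
`{(p,r,c),(p,r+1,c)}`. For every `g` from the vertices to `{0,1}`,
`16·k²·L³ · #{disagreeing edges} ≥ #{disagreeing ordered pairs}`: a `C = Θ(1/L)`
functional inequality for bounded `k`. -/
theorem book_functional_inequality
    (k L : ℕ) (hk : 1 ≤ k) (hL : 1 ≤ L)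
    (g : Fin L ⊕ (Fin k × Fin L × Fin (L - 1)) → Bool) :
    (Finset.univ.filter
        (fun xy : (Fin L ⊕ (Fin k × Fin L × Fin (L - 1))) ×
            (Fin L ⊕ (Fin k × Fin L × Fin (L - 1))) => g xy.1 ≠ g xy.2)).card ≤
    16 * k ^ 2 * L ^ 3 *
      ((Finset.univ.filter (fun t : Fin L × Fin L =>
          (t.2 : ℕ) = (t.1 : ℕ) + 1 ∧ g (Sum.inl t.1) ≠ g (Sum.inl t.2))).card
       + (Finset.univ.filter (fun t : Fin k × Fin L × Fin (L - 1) =>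
          (t.2.2 : ℕ) = 0 ∧ g (Sum.inl t.2.1) ≠ g (Sum.inr t))).card
       + (Finset.univ.filter (fun t : Fin k × Fin L × Fin (L - 1) × Fin (L - 1) =>
          (t.2.2.2 : ℕ) = (t.2.2.1 : ℕ) + 1 ∧
            g (Sum.inr (t.1, t.2.1, t.2.2.1)) ≠ g (Sum.inr (t.1, t.2.1, t.2.2.2)))).card
       + (Finset.univ.filter (fun t : Fin k × Fin L × Fin L × Fin (L - 1) =>
          (t.2.2.1 : ℕ) = (t.2.1 : ℕ) + 1 ∧
            g (Sum.inr (t.1, t.2.1, t.2.2.2)) ≠ g (Sum.inr (t.1, t.2.2.1, t.2.2.2)))).card) := by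
  classical
  set S : Finset (BkV k L × BkV k L) :=
    Finset.univ.filter (fun xy : BkV k L × BkV k L => g xy.1 ≠ g xy.2) with hS
  set M : ℕ := 16 * k ^ 2 * L ^ 3 with hM
  have hz : (0 : ℕ) < L := hL
  set e0 : BkE k L := inl (⟨0, hz⟩, ⟨0, hz⟩) with he0
  set Φ : BkV k L × BkV k L → BkE k L := fun pr =>
    if h : g pr.1 ≠ g pr.2 then (bk_exists g pr h).choose else e0 with hΦ
  have hspec : ∀ pr ∈ S, bkP g (Φ pr) ∧ bkStruct pr (Φ pr) := by
    intro pr hpr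
    rw [hS, Finset.mem_filter] at hpr
    have hpr2 := hpr.2
    simp only [hΦ]
    rw [dif_pos hpr2]
    exact (bk_exists g pr hpr2).choose_spec
  have h1 : S.card ≤ M * (S.image Φ).card := by
    apply Finset.card_le_mul_card_image
    intro e _
    have hsub : S.filter (fun pr => Φ pr = e) ⊆
        Finset.univ.filter (fun pr => bkStruct pr e) := by
      intro pr hpr
      rw [Finset.mem_filter] at hpr ⊢
      exact ⟨Finset.mem_univ _, hpr.2 ▸ (hspec pr hpr.1).2⟩
    refine le_trans (Finset.card_le_card hsub) ?_
    match e with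
    | inl t => exact bk_fiber_left hk hL t
    | inr (inl t) =>
      refine le_trans (le_of_eq ?_) (bk_fiber_row hk hL t.1 t.2.1)
      congr 1
      exact Finset.filter_congr fun pr _ => Iff.rfl
    | inr (inr (inl t)) =>
      refine le_trans (le_of_eq ?_) (bk_fiber_row hk hL t.1 t.2.1)
      congr 1
      exact Finset.filter_congr fun pr _ => Iff.rfl
    | inr (inr (inr t)) => exact bk_fiber_vert hk hL t
  have h2 : S.image Φ ⊆ Finset.univ.filter (bkP g) := by
    intro e he
    rw [Finset.mem_image] at he
    obtain ⟨pr, hpr, rfl⟩ := he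
    rw [Finset.mem_filter]
    exact ⟨Finset.mem_univ _, (hspec pr hpr).1⟩
  have h3 : (Finset.univ.filter (bkP g)).card =
      (Finset.univ.filter fun t : Fin L × Fin L => bkP g (inl t)).card +
      ((Finset.univ.filter fun t : Fin k × Fin L × Fin (L - 1) =>
        bkP g (inr (inl t))).card +
      ((Finset.univ.filter fun t : Fin k × Fin L × Fin (L - 1) × Fin (L - 1) =>
        bkP g (inr (inr (inl t)))).card +
      (Finset.univ.filter fun t : Fin k × Fin L × Fin L × Fin (L - 1) =>
        bkP g (inr (inr (inr t)))).card)) := by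
    rw [bk_filter_sum, bk_filter_sum, bk_filter_sum]
  calc S.card ≤ M * (S.image Φ).card := h1
    _ ≤ M * (Finset.univ.filter (bkP g)).card :=
        Nat.mul_le_mul_left M (Finset.card_le_card h2)
    _ = _ := by
        rw [h3]
        have e1 : (Finset.univ.filter fun t : Fin L × Fin L => bkP g (inl t)) =
            Finset.univ.filter (fun t : Fin L × Fin L =>
              (t.2 : ℕ) = (t.1 : ℕ) + 1 ∧ g (Sum.inl t.1) ≠ g (Sum.inl t.2)) :=
          Finset.filter_congr fun t _ => Iff.rfl
        have e2 : (Finset.univ.filter fun t : Fin k × Fin L × Fin (L - 1) =>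
              bkP g (inr (inl t))) =
            Finset.univ.filter (fun t : Fin k × Fin L × Fin (L - 1) =>
              (t.2.2 : ℕ) = 0 ∧ g (Sum.inl t.2.1) ≠ g (Sum.inr t)) :=
          Finset.filter_congr fun t _ => Iff.rfl
        have e3 : (Finset.univ.filter fun t : Fin k × Fin L × Fin (L - 1) × Fin (L - 1) =>
              bkP g (inr (inr (inl t)))) =
            Finset.univ.filter (fun t : Fin k × Fin L × Fin (L - 1) × Fin (L - 1) =>
              (t.2.2.2 : ℕ) = (t.2.2.1 : ℕ) + 1 ∧
                g (Sum.inr (t.1, t.2.1, t.2.2.1)) ≠ g (Sum.inr (t.1, t.2.1, t.2.2.2))) :=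
          Finset.filter_congr fun t _ => Iff.rfl
        have e4 : (Finset.univ.filter fun t : Fin k × Fin L × Fin L × Fin (L - 1) =>
              bkP g (inr (inr (inr t)))) =
            Finset.univ.filter (fun t : Fin k × Fin L × Fin L × Fin (L - 1) =>
              (t.2.2.1 : ℕ) = (t.2.1 : ℕ) + 1 ∧
                g (Sum.inr (t.1, t.2.1, t.2.2.2)) ≠ g (Sum.inr (t.1, t.2.2.1, t.2.2.2))) :=
          Finset.filter_congr fun t _ => Iff.rfl
        rw [e1, e2, e3, e4, hM]
        ring
end
end
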